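/- Suppose u, ρ, S solve adiabatic compressible Euler with a general equation of state, and let φ and ψ be Clebsch potentials satisfying (∂ₜ + u·∇)φ = (1/2)|u|² − E − p/ρ and (∂ₜ + u·∇)ψ = T, where TdS = dE + p d(1/ρ). Then the nonlocal vorticity ϖ = (1/ρ)(∇×u − ∇ψ × ∇S) is a vector invariant: ∂ₜϖ + (u·∇)ϖ − (ϖ·∇)u = 0. -/

import Mathlib

open scoped BigOperators

noncomputable section

/-- Three-dimensional space as `Fin 3 → ℝ`. -/
abbrev V3 : Type := Fin 3 → ℝ

/-- Spatial partial derivative `∂ᵢ` of a time-dependent scalar field. -/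
def pd (i : Fin 3) (f : ℝ → V3 → ℝ) (t : ℝ) (x : V3) : ℝ :=
  fderiv ℝ (f t) x (Pi.single i 1)

/-- Time derivative `∂ₜ` of a time-dependent scalar field. -/
def pt (f : ℝ → V3 → ℝ) (t : ℝ) (x : V3) : ℝ :=
  deriv (fun s => f s x) t

/-- The `i`-th component of a time-dependent vector field. -/
def comp (K : ℝ → V3 → V3) (i : Fin 3) : ℝ → V3 → ℝ := fun t x => K t x i

/-- Spatial divergence `∇·K`. -/
def div3 (K : ℝ → V3 → V3) (t : ℝ) (x : V3) : ℝ :=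
  ∑ i, pd i (comp K i) t x

/-- Spatial gradient `∇f`. -/
def grad3 (f : ℝ → V3 → ℝ) (t : ℝ) (x : V3) : V3 :=
  fun i => pd i f t x

/-- Spatial curl `∇×K`. -/
def curl3 (K : ℝ → V3 → V3) (t : ℝ) (x : V3) : V3 :=
  ![pd 1 (comp K 2) t x - pd 2 (comp K 1) t x,
    pd 2 (comp K 0) t x - pd 0 (comp K 2) t x,
    pd 0 (comp K 1) t x - pd 1 (comp K 0) t x]

/-- Dot product on `ℝ³`. -/
def dot3 (a b : V3) : ℝ := ∑ i, a i * b i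

/-- Cross product on `ℝ³`. -/
def cross3 (a b : V3) : V3 :=
  ![a 1 * b 2 - a 2 * b 1, a 2 * b 0 - a 0 * b 2, a 0 * b 1 - a 1 * b 0]

/-- Material derivative `∂ₜ + u·∇` on scalar fields. -/
def matD (u : ℝ → V3 → V3) (f : ℝ → V3 → ℝ) (t : ℝ) (x : V3) : ℝ :=
  pt f t x + ∑ i, u t x i * pd i f t x

/-- Advective Lie derivative `𝔇ₜK = ∂ₜK + (u·∇)K − (K·∇)u` on vector fields. -/
def DtVec (u K : ℝ → V3 → V3) (t : ℝ) (x : V3) : V3 :=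
  fun i => pt (comp K i) t x + ∑ j, u t x j * pd j (comp K i) t x
    - ∑ j, K t x j * pd j (comp u i) t x

/-- Symmetric derivative of `u`: `sᵢⱼ = ∂ᵢuⱼ + ∂ⱼuᵢ`. -/
def symmDer (u : ℝ → V3 → V3) (t : ℝ) (x : V3) (i j : Fin 3) : ℝ :=
  pd i (comp u j) t x + pd j (comp u i) t x

/-- Smoothness of a time-dependent scalar field. -/
def SmoothS (f : ℝ → V3 → ℝ) : Prop := ContDiff ℝ (⊤ : ℕ∞) (fun p : ℝ × V3 => f p.1 p.2)

/-- Smoothness of a time-dependent vector field. -/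
def SmoothVec (K : ℝ → V3 → V3) : Prop := ContDiff ℝ (⊤ : ℕ∞) (fun p : ℝ × V3 => K p.1 p.2)

def J (f : ℝ → V3 → ℝ) : ℝ × V3 → ℝ := fun q => f q.1 q.2


lemma diff_space (f : ℝ → V3 → ℝ) (hf : SmoothS f) (t : ℝ) : Differentiable ℝ (f t) := by
  have : f t = fun y => J f (t, y) := rfl
  rw [this]
  exact (hf.differentiable (by simp)).comp ((differentiable_const t).prodMk differentiable_id)

lemma pd_eq (f : ℝ → V3 → ℝ) (hf : SmoothS f) (i : Fin 3) (t : ℝ) (x : V3) :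
    pd i f t x = fderiv ℝ (J f) (t, x) (0, Pi.single i 1) := by
  have h1 : HasFDerivAt (J f) (fderiv ℝ (J f) (t, x)) (t, x) :=
    ((hf.differentiable (by simp)) (t, x)).hasFDerivAt
  have h2 := h1.comp x (hasFDerivAt_prodMk_right t x)
  have h3 : f t = fun y => J f (t, y) := rfl
  have h2' : HasFDerivAt (fun y => J f (t, y))
      ((fderiv ℝ (J f) (t, x)).comp (ContinuousLinearMap.inr ℝ ℝ V3)) x := h2
  unfold pd
  rw [h3, h2'.fderiv]
  simp

lemma pt_eq (f : ℝ → V3 → ℝ) (hf : SmoothS f) (t : ℝ) (x : V3) :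
    pt f t x = fderiv ℝ (J f) (t, x) (1, 0) := by
  have h1 : HasFDerivAt (J f) (fderiv ℝ (J f) (t, x)) (t, x) :=
    ((hf.differentiable (by simp)) (t, x)).hasFDerivAt
  have h2 := (h1.comp t (hasFDerivAt_prodMk_left t x)).hasDerivAt
  have h2' : HasDerivAt (fun s => J f (s, x))
      (((fderiv ℝ (J f) (t, x)).comp (ContinuousLinearMap.inl ℝ ℝ V3)) 1) t := h2
  unfold pt
  rw [show (fun s => f s x) = fun s => J f (s, x) from rfl, h2'.deriv]
  simp

def DD (v : ℝ × V3) (f : ℝ → V3 → ℝ) : ℝ → V3 → ℝ := fun t x => fderiv ℝ (J f) (t, x) v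

lemma J_DD (v : ℝ × V3) (f : ℝ → V3 → ℝ) : J (DD v f) = fun q => fderiv ℝ (J f) q v := by
  funext q; simp [J, DD]

lemma smooth_DD (f : ℝ → V3 → ℝ) (hf : SmoothS f) (v : ℝ × V3) : SmoothS (DD v f) := by
  unfold SmoothS
  have : (fun q : ℝ × V3 => DD v f q.1 q.2) = fun q => fderiv ℝ (J f) q v := J_DD v f
  rw [this]
  exact (hf.fderiv_right (by simp)).clm_apply contDiff_const

lemma pd_eq' (f : ℝ → V3 → ℝ) (hf : SmoothS f) (i : Fin 3) :
    pd i f = DD (0, Pi.single i 1) f :=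
  funext fun t => funext fun x => pd_eq f hf i t x

lemma pt_eq' (f : ℝ → V3 → ℝ) (hf : SmoothS f) : pt f = DD (1, 0) f :=
  funext fun t => funext fun x => pt_eq f hf t x

lemma DD_comm (f : ℝ → V3 → ℝ) (hf : SmoothS f) (v w : ℝ × V3) :
    DD v (DD w f) = DD w (DD v f) := by
  have hA : Differentiable ℝ (fderiv ℝ (J f)) :=
    (hf.fderiv_right (m := 1) (WithTop.coe_le_coe.mpr le_top)).differentiable one_ne_zero
  have key : ∀ v w : ℝ × V3, ∀ q : ℝ × V3, DD v (DD w f) q.1 q.2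
      = fderiv ℝ (fderiv ℝ (J f)) q v w := by
    intro v w q
    have h1 : HasFDerivAt (fun q' => (ContinuousLinearMap.apply ℝ ℝ w) (fderiv ℝ (J f) q'))
        ((ContinuousLinearMap.apply ℝ ℝ w).comp (fderiv ℝ (fderiv ℝ (J f)) q)) q :=
      (ContinuousLinearMap.apply ℝ ℝ w).hasFDerivAt.comp q (hA q).hasFDerivAt
    have h1' : HasFDerivAt (fun q' => fderiv ℝ (J f) q' w)
        ((ContinuousLinearMap.apply ℝ ℝ w).comp (fderiv ℝ (fderiv ℝ (J f)) q)) q := h1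
    show fderiv ℝ (J (DD w f)) (q.1, q.2) v = _
    rw [J_DD]
    rw [show (q.1, q.2) = q from rfl]
    rw [h1'.fderiv]
    simp
  funext t x
  have h2 := key v w (t, x)
  have h3 := key w v (t, x)
  simp only at h2 h3
  rw [show DD v (DD w f) t x = DD v (DD w f) (t,x).1 (t,x).2 from rfl, h2,
    show DD w (DD v f) t x = DD w (DD v f) (t,x).1 (t,x).2 from rfl, h3]
  exact (hf.contDiffAt.isSymmSndFDerivAt (by rw [minSmoothness_of_isRCLikeNormedField]; exact WithTop.coe_le_coe.mpr le_top)).eq v w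

lemma pd_pd_comm (f : ℝ → V3 → ℝ) (hf : SmoothS f) (i j : Fin 3) (t : ℝ) (x : V3) :
    pd i (pd j f) t x = pd j (pd i f) t x := by
  rw [pd_eq' f hf j, pd_eq' f hf i,
    pd_eq' _ (smooth_DD f hf _) i, pd_eq' _ (smooth_DD f hf _) j, DD_comm f hf]

lemma pt_pd_comm (f : ℝ → V3 → ℝ) (hf : SmoothS f) (i : Fin 3) (t : ℝ) (x : V3) :
    pt (pd i f) t x = pd i (pt f) t x := by
  rw [pd_eq' f hf i, pt_eq' f hf,
    pt_eq' _ (smooth_DD f hf _), pd_eq' _ (smooth_DD f hf _), DD_comm f hf]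

lemma diff_time (f : ℝ → V3 → ℝ) (hf : SmoothS f) (x : V3) :
    Differentiable ℝ (fun s => f s x) := by
  have : (fun s => f s x) = fun s => J f (s, x) := rfl
  rw [this]
  exact (hf.differentiable (by simp)).comp (differentiable_id.prodMk (differentiable_const x))

lemma pd_congr {f g : ℝ → V3 → ℝ} (h : ∀ t x, f t x = g t x) (i : Fin 3) (t : ℝ) (x : V3) :
    pd i f t x = pd i g t x := by
  have : f = g := funext fun t => funext fun x => h t x
  rw [this]

lemma pt_congr {f g : ℝ → V3 → ℝ} (h : ∀ t x, f t x = g t x) (t : ℝ) (x : V3) :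
    pt f t x = pt g t x := by
  have : f = g := funext fun t => funext fun x => h t x
  rw [this]

lemma pd_const (c : ℝ) (i : Fin 3) (t : ℝ) (x : V3) : pd i (fun _ _ => c) t x = 0 := by
  simp [pd]

lemma pt_const (c : ℝ) (t : ℝ) (x : V3) : pt (fun _ _ => c) t x = 0 := by
  simp [pt]

lemma smoothS_add {f g : ℝ → V3 → ℝ} (hf : SmoothS f) (hg : SmoothS g) :
    SmoothS (fun t x => f t x + g t x) := hf.add hg

lemma smoothS_sub {f g : ℝ → V3 → ℝ} (hf : SmoothS f) (hg : SmoothS g) :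
    SmoothS (fun t x => f t x - g t x) := hf.sub hg

lemma smoothS_mul {f g : ℝ → V3 → ℝ} (hf : SmoothS f) (hg : SmoothS g) :
    SmoothS (fun t x => f t x * g t x) := hf.mul hg

lemma smoothS_neg {f : ℝ → V3 → ℝ} (hf : SmoothS f) :
    SmoothS (fun t x => -(f t x)) := hf.neg

lemma smooth_pd {f : ℝ → V3 → ℝ} (hf : SmoothS f) (i : Fin 3) : SmoothS (pd i f) := by
  rw [pd_eq' f hf i]; exact smooth_DD f hf _

lemma smooth_pt {f : ℝ → V3 → ℝ} (hf : SmoothS f) : SmoothS (pt f) := by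
  rw [pt_eq' f hf]; exact smooth_DD f hf _

lemma pd_add {f g : ℝ → V3 → ℝ} (hf : SmoothS f) (hg : SmoothS g) (i : Fin 3) (t : ℝ) (x : V3) :
    pd i (fun t x => f t x + g t x) t x = pd i f t x + pd i g t x := by
  unfold pd
  have : (fun t x => f t x + g t x) t = fun y => f t y + g t y := rfl
  rw [this, fderiv_fun_add ((diff_space f hf t) x) ((diff_space g hg t) x)]
  simp

lemma pd_sub {f g : ℝ → V3 → ℝ} (hf : SmoothS f) (hg : SmoothS g) (i : Fin 3) (t : ℝ) (x : V3) :
    pd i (fun t x => f t x - g t x) t x = pd i f t x - pd i g t x := by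
  unfold pd
  have : (fun t x => f t x - g t x) t = fun y => f t y - g t y := rfl
  rw [this, fderiv_fun_sub ((diff_space f hf t) x) ((diff_space g hg t) x)]
  simp

lemma pd_mul {f g : ℝ → V3 → ℝ} (hf : SmoothS f) (hg : SmoothS g) (i : Fin 3) (t : ℝ) (x : V3) :
    pd i (fun t x => f t x * g t x) t x = pd i f t x * g t x + f t x * pd i g t x := by
  unfold pd
  have : (fun t x => f t x * g t x) t = fun y => f t y * g t y := rfl
  rw [this, fderiv_fun_mul ((diff_space f hf t) x) ((diff_space g hg t) x)]
  simp
  ring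

lemma pd_neg {f : ℝ → V3 → ℝ} (hf : SmoothS f) (i : Fin 3) (t : ℝ) (x : V3) :
    pd i (fun t x => -(f t x)) t x = -(pd i f t x) := by
  unfold pd
  have : (fun t x => -(f t x)) t = fun y => -(f t y) := rfl
  rw [this, fderiv_fun_neg]
  simp

lemma pt_sub {f g : ℝ → V3 → ℝ} (hf : SmoothS f) (hg : SmoothS g) (t : ℝ) (x : V3) :
    pt (fun t x => f t x - g t x) t x = pt f t x - pt g t x := by
  unfold pt
  exact deriv_sub ((diff_time f hf x) t) ((diff_time g hg x) t)

lemma pt_mul {f g : ℝ → V3 → ℝ} (hf : SmoothS f) (hg : SmoothS g) (t : ℝ) (x : V3) :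
    pt (fun t x => f t x * g t x) t x = pt f t x * g t x + f t x * pt g t x := by
  unfold pt
  rw [deriv_fun_mul ((diff_time f hf x) t) ((diff_time g hg x) t)]

lemma smoothS_comp {u : ℝ → V3 → V3} (hu : SmoothVec u) (i : Fin 3) : SmoothS (comp u i) :=
  (contDiff_pi.mp hu) i

lemma smoothS_one_div {ρ : ℝ → V3 → ℝ} (hρ : SmoothS ρ) (hpos : ∀ t x, 0 < ρ t x) :
    SmoothS (fun t x => 1 / ρ t x) :=
  ContDiff.div contDiff_const hρ (fun q => (hpos q.1 q.2).ne')

lemma pd_one_div {ρ : ℝ → V3 → ℝ} (hρ : SmoothS ρ) (hpos : ∀ t x, 0 < ρ t x)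
    (i : Fin 3) (t : ℝ) (x : V3) :
    pd i (fun t x => 1 / ρ t x) t x = -(pd i ρ t x) / (ρ t x) ^ 2 := by
  have hg : SmoothS (fun t x => 1 / ρ t x) := smoothS_one_div hρ hpos
  have h1 : ∀ t x, ρ t x * (1 / ρ t x) = (fun _ _ => (1:ℝ)) t x := by
    intro t x; field_simp [(hpos t x).ne']
  have h2 : pd i (fun t x => ρ t x * (1 / ρ t x)) t x = 0 := by
    rw [pd_congr h1]; exact pd_const 1 i t x
  rw [pd_mul hρ hg i t x] at h2
  have hne : ρ t x ≠ 0 := (hpos t x).ne'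
  field_simp at h2 ⊢
  linarith [h2]

lemma pt_one_div {ρ : ℝ → V3 → ℝ} (hρ : SmoothS ρ) (hpos : ∀ t x, 0 < ρ t x)
    (t : ℝ) (x : V3) :
    pt (fun t x => 1 / ρ t x) t x = -(pt ρ t x) / (ρ t x) ^ 2 := by
  have hg : SmoothS (fun t x => 1 / ρ t x) := smoothS_one_div hρ hpos
  have h1 : ∀ t x, ρ t x * (1 / ρ t x) = (fun _ _ => (1:ℝ)) t x := by
    intro t x; field_simp [(hpos t x).ne']
  have h2 : pt (fun t x => ρ t x * (1 / ρ t x)) t x = 0 := by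
    rw [pt_congr h1]; exact pt_const 1 t x
  rw [pt_mul hρ hg t x] at h2
  have hne : ρ t x ≠ 0 := (hpos t x).ne'
  field_simp at h2 ⊢
  linarith [h2]

lemma pd_matD {u : ℝ → V3 → V3} {f : ℝ → V3 → ℝ} (hu : SmoothVec u) (hf : SmoothS f)
    (j : Fin 3) (t : ℝ) (x : V3) :
    pd j (fun t x => matD u f t x) t x
    = pd j (pt f) t x
      + (pd j (comp u 0) t x * pd 0 f t x + comp u 0 t x * pd j (pd 0 f) t x)
      + (pd j (comp u 1) t x * pd 1 f t x + comp u 1 t x * pd j (pd 1 f) t x)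
      + (pd j (comp u 2) t x * pd 2 f t x + comp u 2 t x * pd j (pd 2 f) t x) := by
  have hc : ∀ k, SmoothS (comp u k) := smoothS_comp hu
  have h0 : ∀ t x, matD u f t x
      = pt f t x + (comp u 0 t x * pd 0 f t x + comp u 1 t x * pd 1 f t x
        + comp u 2 t x * pd 2 f t x) := by
    intro t x; rw [matD, Fin.sum_univ_three]; rfl
  rw [pd_congr h0]
  rw [pd_add (smooth_pt hf) (smoothS_add (smoothS_add (smoothS_mul (hc 0) (smooth_pd hf 0))
    (smoothS_mul (hc 1) (smooth_pd hf 1))) (smoothS_mul (hc 2) (smooth_pd hf 2)))]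
  rw [pd_add (smoothS_add (smoothS_mul (hc 0) (smooth_pd hf 0))
    (smoothS_mul (hc 1) (smooth_pd hf 1))) (smoothS_mul (hc 2) (smooth_pd hf 2))]
  rw [pd_add (smoothS_mul (hc 0) (smooth_pd hf 0)) (smoothS_mul (hc 1) (smooth_pd hf 1))]
  rw [pd_mul (hc 0) (smooth_pd hf 0), pd_mul (hc 1) (smooth_pd hf 1),
    pd_mul (hc 2) (smooth_pd hf 2)]
  ring

/-- The nonlocal vorticity `ϖ = (1/ρ)(∇×u − ∇ψ × ∇S)` is a vector invariant of
adiabatic compressible Euler flow, where `φ, ψ` are Clebsch potentials. -/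
theorem nonlocal_vorticity_invariant_adiabatic
    (u : ℝ → V3 → V3) (ρ S p T E φ ψ : ℝ → V3 → ℝ)
    (hu : SmoothVec u) (hρ : SmoothS ρ) (hS : SmoothS S) (hp : SmoothS p)
    (hT : SmoothS T) (hE : SmoothS E) (hφ : SmoothS φ) (hψ : SmoothS ψ)
    (hρpos : ∀ t x, 0 < ρ t x)
    (hmom : ∀ t x i, pt (comp u i) t x + (∑ j, u t x j * pd j (comp u i) t x)
      = -(1 / ρ t x) * pd i p t x)
    (hmass : ∀ t x, pt ρ t x + div3 (fun t x i => ρ t x * u t x i) t x = 0)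
    (hent : ∀ t x, matD u S t x = 0)
    (hthermo : ∀ t x i, (1 / ρ t x) * pd i p t x
      = pd i (fun t x => E t x + p t x / ρ t x) t x - T t x * pd i S t x)
    (hφeq : ∀ t x, matD u φ t x
      = (1/2) * dot3 (u t x) (u t x) - E t x - p t x / ρ t x)
    (hψeq : ∀ t x, matD u ψ t x = T t x) :
    ∀ t x, DtVec u
      (fun t x i => (1 / ρ t x)
        * (curl3 u t x i - cross3 (grad3 ψ t x) (grad3 S t x) i)) t x = 0 := by
  intro t x
  have sU : ∀ k, SmoothS (comp u k) := smoothS_comp hu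
  have sg : SmoothS (fun t x => 1 / ρ t x) := smoothS_one_div hρ hρpos
  have sB : SmoothS (fun t x => E t x + p t x / ρ t x) :=
    hE.add (hp.div hρ (fun q => (hρpos q.1 q.2).ne'))
  have cu : ∀ j : Fin 3, u t x j = comp u j t x := fun _ => rfl
  have hinv : ρ t x * (1 / ρ t x) = 1 := by field_simp [(hρpos t x).ne']
  have hC : ∀ t x, ∀ i2 : Fin 3, matD u (comp u i2) t x
      = -(pd i2 (fun t x => E t x + p t x / ρ t x) t x) + T t x * pd i2 S t x := by
    intro t x i2
    have h1 := hmom t x i2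
    have h2 := hthermo t x i2
    simp only [matD]
    rw [h1]
    linear_combination -h2
  have eC : ∀ jd i2 : Fin 3,
      pd jd (pt (comp u i2)) t x
        + (pd jd (comp u 0) t x * pd 0 (comp u i2) t x + comp u 0 t x * pd jd (pd 0 (comp u i2)) t x)
        + (pd jd (comp u 1) t x * pd 1 (comp u i2) t x + comp u 1 t x * pd jd (pd 1 (comp u i2)) t x)
        + (pd jd (comp u 2) t x * pd 2 (comp u i2) t x + comp u 2 t x * pd jd (pd 2 (comp u i2)) t x)
      = -(pd jd (pd i2 (fun t x => E t x + p t x / ρ t x)) t x)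
        + (pd jd T t x * pd i2 S t x + T t x * pd jd (pd i2 S) t x) := by
    intro jd i2
    have h1 : pd jd (fun t x => matD u (comp u i2) t x) t x
        = pd jd (fun t x => -(pd i2 (fun t x => E t x + p t x / ρ t x) t x)
            + T t x * pd i2 S t x) t x :=
      pd_congr (fun t x => hC t x i2) jd t x
    rw [pd_matD hu (sU i2)] at h1
    rw [pd_add (smoothS_neg (smooth_pd sB i2)) (smoothS_mul hT (smooth_pd hS i2)),
      pd_neg (smooth_pd sB i2), pd_mul hT (smooth_pd hS i2)] at h1
    exact h1
  have eA : ∀ jd : Fin 3,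
      pd jd (pt S) t x
        + (pd jd (comp u 0) t x * pd 0 S t x + comp u 0 t x * pd jd (pd 0 S) t x)
        + (pd jd (comp u 1) t x * pd 1 S t x + comp u 1 t x * pd jd (pd 1 S) t x)
        + (pd jd (comp u 2) t x * pd 2 S t x + comp u 2 t x * pd jd (pd 2 S) t x) = 0 := by
    intro jd
    have h1 : pd jd (fun t x => matD u S t x) t x = pd jd (fun _ _ => (0:ℝ)) t x :=
      pd_congr (fun t x => hent t x) jd t x
    rw [pd_matD hu hS, pd_const] at h1
    exact h1
  have eP : ∀ jd : Fin 3,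
      pd jd (pt ψ) t x
        + (pd jd (comp u 0) t x * pd 0 ψ t x + comp u 0 t x * pd jd (pd 0 ψ) t x)
        + (pd jd (comp u 1) t x * pd 1 ψ t x + comp u 1 t x * pd jd (pd 1 ψ) t x)
        + (pd jd (comp u 2) t x * pd 2 ψ t x + comp u 2 t x * pd jd (pd 2 ψ) t x)
      = pd jd T t x := by
    intro jd
    have h1 : pd jd (fun t x => matD u ψ t x) t x = pd jd T t x :=
      pd_congr (fun t x => hψeq t x) jd t x
    rw [pd_matD hu hψ] at h1
    exact h1
  have eM : pt ρ t x
      + (pd 0 ρ t x * comp u 0 t x + ρ t x * pd 0 (comp u 0) t x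
        + (pd 1 ρ t x * comp u 1 t x + ρ t x * pd 1 (comp u 1) t x)
        + (pd 2 ρ t x * comp u 2 t x + ρ t x * pd 2 (comp u 2) t x)) = 0 := by
    have h1 := hmass t x
    simp only [div3, Fin.sum_univ_three] at h1
    have d0 : ∀ t' x', comp (fun t x i => ρ t x * u t x i) 0 t' x'
        = (fun t x => ρ t x * comp u 0 t x) t' x' := fun _ _ => rfl
    have d1 : ∀ t' x', comp (fun t x i => ρ t x * u t x i) 1 t' x'
        = (fun t x => ρ t x * comp u 1 t x) t' x' := fun _ _ => rfl
    have d2 : ∀ t' x', comp (fun t x i => ρ t x * u t x i) 2 t' x'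
        = (fun t x => ρ t x * comp u 2 t x) t' x' := fun _ _ => rfl
    rw [pd_congr d0 0 t x, pd_congr d1 1 t x, pd_congr d2 2 t x,
      pd_mul hρ (sU 0), pd_mul hρ (sU 1), pd_mul hρ (sU 2)] at h1
    linear_combination h1
  have sW0 : SmoothS (fun t x => pd 1 (comp u 2) t x - pd 2 (comp u 1) t x -
      (pd 1 ψ t x * pd 2 S t x - pd 2 ψ t x * pd 1 S t x)) := (smoothS_sub (smoothS_sub (smooth_pd (sU 2) 1) (smooth_pd (sU 1) 2)) (smoothS_sub (smoothS_mul (smooth_pd hψ 1) (smooth_pd hS 2)) (smoothS_mul (smooth_pd hψ 2) (smooth_pd hS 1))))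
  have sW1 : SmoothS (fun t x => pd 2 (comp u 0) t x - pd 0 (comp u 2) t x -
      (pd 2 ψ t x * pd 0 S t x - pd 0 ψ t x * pd 2 S t x)) := (smoothS_sub (smoothS_sub (smooth_pd (sU 0) 2) (smooth_pd (sU 2) 0)) (smoothS_sub (smoothS_mul (smooth_pd hψ 2) (smooth_pd hS 0)) (smoothS_mul (smooth_pd hψ 0) (smooth_pd hS 2))))
  have sW2 : SmoothS (fun t x => pd 0 (comp u 1) t x - pd 1 (comp u 0) t x -
      (pd 0 ψ t x * pd 1 S t x - pd 1 ψ t x * pd 0 S t x)) := (smoothS_sub (smoothS_sub (smooth_pd (sU 1) 0) (smooth_pd (sU 0) 1)) (smoothS_sub (smoothS_mul (smooth_pd hψ 0) (smooth_pd hS 1)) (smoothS_mul (smooth_pd hψ 1) (smooth_pd hS 0))))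
  funext i
  fin_cases i
  ·
    simp only [DtVec, Fin.sum_univ_three, Pi.zero_apply, Fin.zero_eta, Fin.mk_one, Fin.reduceFinMk]
    have e0 : ∀ t' x', comp (fun t x i => (1 / ρ t x) * (curl3 u t x i - cross3 (grad3 ψ t x) (grad3 S t x) i)) 0 t' x'
        = (fun t x => 1 / ρ t x * (pd 1 (comp u 2) t x - pd 2 (comp u 1) t x -
          (pd 1 ψ t x * pd 2 S t x - pd 2 ψ t x * pd 1 S t x))) t' x' := fun _ _ => rfl
    have k0 : curl3 u t x 0 = pd 1 (comp u 2) t x - pd 2 (comp u 1) t x := rfl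
    have c0 : cross3 (grad3 ψ t x) (grad3 S t x) 0 = pd 1 ψ t x * pd 2 S t x - pd 2 ψ t x * pd 1 S t x := rfl
    have k1 : curl3 u t x 1 = pd 2 (comp u 0) t x - pd 0 (comp u 2) t x := rfl
    have c1 : cross3 (grad3 ψ t x) (grad3 S t x) 1 = pd 2 ψ t x * pd 0 S t x - pd 0 ψ t x * pd 2 S t x := rfl
    have k2 : curl3 u t x 2 = pd 0 (comp u 1) t x - pd 1 (comp u 0) t x := rfl
    have c2 : cross3 (grad3 ψ t x) (grad3 S t x) 2 = pd 0 ψ t x * pd 1 S t x - pd 1 ψ t x * pd 0 S t x := rfl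
    rw [pt_congr e0 t x, pd_congr e0 0 t x, pd_congr e0 1 t x, pd_congr e0 2 t x,
      k0, c0, k1, c1, k2, c2, cu 0, cu 1, cu 2]
    rw [pt_mul sg sW0, pt_one_div hρ hρpos,
      pt_sub (smoothS_sub (smooth_pd (sU 2) 1) (smooth_pd (sU 1) 2))
        (smoothS_sub (smoothS_mul (smooth_pd hψ 1) (smooth_pd hS 2)) (smoothS_mul (smooth_pd hψ 2) (smooth_pd hS 1))),
      pt_sub (smooth_pd (sU 2) 1) (smooth_pd (sU 1) 2),
      pt_sub (smoothS_mul (smooth_pd hψ 1) (smooth_pd hS 2)) (smoothS_mul (smooth_pd hψ 2) (smooth_pd hS 1)),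
      pt_mul (smooth_pd hψ 1) (smooth_pd hS 2), pt_mul (smooth_pd hψ 2) (smooth_pd hS 1)]
    rw [pt_pd_comm _ (sU 2) 1 t x, pt_pd_comm _ (sU 1) 2 t x,
      pt_pd_comm _ hψ 1 t x, pt_pd_comm _ hψ 2 t x,
      pt_pd_comm _ hS 1 t x, pt_pd_comm _ hS 2 t x]
    rw [pd_mul sg sW0 0 t x, pd_one_div hρ hρpos 0 t x,
      pd_sub (smoothS_sub (smooth_pd (sU 2) 1) (smooth_pd (sU 1) 2))
        (smoothS_sub (smoothS_mul (smooth_pd hψ 1) (smooth_pd hS 2)) (smoothS_mul (smooth_pd hψ 2) (smooth_pd hS 1))) 0 t x,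
      pd_sub (smooth_pd (sU 2) 1) (smooth_pd (sU 1) 2) 0 t x,
      pd_sub (smoothS_mul (smooth_pd hψ 1) (smooth_pd hS 2)) (smoothS_mul (smooth_pd hψ 2) (smooth_pd hS 1)) 0 t x,
      pd_mul (smooth_pd hψ 1) (smooth_pd hS 2) 0 t x,
      pd_mul (smooth_pd hψ 2) (smooth_pd hS 1) 0 t x]
    rw [pd_mul sg sW0 1 t x, pd_one_div hρ hρpos 1 t x,
      pd_sub (smoothS_sub (smooth_pd (sU 2) 1) (smooth_pd (sU 1) 2))
        (smoothS_sub (smoothS_mul (smooth_pd hψ 1) (smooth_pd hS 2)) (smoothS_mul (smooth_pd hψ 2) (smooth_pd hS 1))) 1 t x,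
      pd_sub (smooth_pd (sU 2) 1) (smooth_pd (sU 1) 2) 1 t x,
      pd_sub (smoothS_mul (smooth_pd hψ 1) (smooth_pd hS 2)) (smoothS_mul (smooth_pd hψ 2) (smooth_pd hS 1)) 1 t x,
      pd_mul (smooth_pd hψ 1) (smooth_pd hS 2) 1 t x,
      pd_mul (smooth_pd hψ 2) (smooth_pd hS 1) 1 t x]
    rw [pd_mul sg sW0 2 t x, pd_one_div hρ hρpos 2 t x,
      pd_sub (smoothS_sub (smooth_pd (sU 2) 1) (smooth_pd (sU 1) 2))
        (smoothS_sub (smoothS_mul (smooth_pd hψ 1) (smooth_pd hS 2)) (smoothS_mul (smooth_pd hψ 2) (smooth_pd hS 1))) 2 t x,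
      pd_sub (smooth_pd (sU 2) 1) (smooth_pd (sU 1) 2) 2 t x,
      pd_sub (smoothS_mul (smooth_pd hψ 1) (smooth_pd hS 2)) (smoothS_mul (smooth_pd hψ 2) (smooth_pd hS 1)) 2 t x,
      pd_mul (smooth_pd hψ 1) (smooth_pd hS 2) 2 t x,
      pd_mul (smooth_pd hψ 2) (smooth_pd hS 1) 2 t x]
    rw [pd_pd_comm (comp u 2) (sU 2) 2 1 t x, pd_pd_comm ψ hψ 2 1 t x, pd_pd_comm S hS 2 1 t x]
    have EC1 := eC 1 2
    have EC2 := eC 2 1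
    have PA := eP 1
    have PB := eP 2
    have AA := eA 1
    have AB := eA 2
    rw [pd_pd_comm (comp u 2) (sU 2) 1 0 t x] at EC1
    rw [pd_pd_comm (comp u 1) (sU 1) 2 0 t x, pd_pd_comm (comp u 1) (sU 1) 2 1 t x, pd_pd_comm (fun t x => E t x + p t x / ρ t x) sB 2 1 t x, pd_pd_comm S hS 2 1 t x] at EC2
    rw [pd_pd_comm ψ hψ 1 0 t x] at PA
    rw [pd_pd_comm ψ hψ 2 0 t x, pd_pd_comm ψ hψ 2 1 t x] at PB
    rw [pd_pd_comm S hS 1 0 t x] at AA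
    rw [pd_pd_comm S hS 2 0 t x, pd_pd_comm S hS 2 1 t x] at AB
    beta_reduce
    linear_combination (1 / ρ t x) * EC1 - (1 / ρ t x) * EC2
      - (1 / ρ t x) * (pd 2 S t x * PA - pd 1 S t x * PB
        + pd 1 ψ t x * AB - pd 2 ψ t x * AA)
      - ((pd 1 (comp u 2) t x - pd 2 (comp u 1) t x - (pd 1 ψ t x * pd 2 S t x - pd 2 ψ t x * pd 1 S t x)) / (ρ t x) ^ 2) * eM
      + (1 / ρ t x) * (pd 1 (comp u 2) t x - pd 2 (comp u 1) t x - (pd 1 ψ t x * pd 2 S t x - pd 2 ψ t x * pd 1 S t x))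
        * (pd 0 (comp u 0) t x + pd 1 (comp u 1) t x + pd 2 (comp u 2) t x) * hinv
  ·
    simp only [DtVec, Fin.sum_univ_three, Pi.zero_apply, Fin.zero_eta, Fin.mk_one, Fin.reduceFinMk]
    have e0 : ∀ t' x', comp (fun t x i => (1 / ρ t x) * (curl3 u t x i - cross3 (grad3 ψ t x) (grad3 S t x) i)) 1 t' x'
        = (fun t x => 1 / ρ t x * (pd 2 (comp u 0) t x - pd 0 (comp u 2) t x -
          (pd 2 ψ t x * pd 0 S t x - pd 0 ψ t x * pd 2 S t x))) t' x' := fun _ _ => rfl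
    have k0 : curl3 u t x 0 = pd 1 (comp u 2) t x - pd 2 (comp u 1) t x := rfl
    have c0 : cross3 (grad3 ψ t x) (grad3 S t x) 0 = pd 1 ψ t x * pd 2 S t x - pd 2 ψ t x * pd 1 S t x := rfl
    have k1 : curl3 u t x 1 = pd 2 (comp u 0) t x - pd 0 (comp u 2) t x := rfl
    have c1 : cross3 (grad3 ψ t x) (grad3 S t x) 1 = pd 2 ψ t x * pd 0 S t x - pd 0 ψ t x * pd 2 S t x := rfl
    have k2 : curl3 u t x 2 = pd 0 (comp u 1) t x - pd 1 (comp u 0) t x := rfl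
    have c2 : cross3 (grad3 ψ t x) (grad3 S t x) 2 = pd 0 ψ t x * pd 1 S t x - pd 1 ψ t x * pd 0 S t x := rfl
    rw [pt_congr e0 t x, pd_congr e0 0 t x, pd_congr e0 1 t x, pd_congr e0 2 t x,
      k0, c0, k1, c1, k2, c2, cu 0, cu 1, cu 2]
    rw [pt_mul sg sW1, pt_one_div hρ hρpos,
      pt_sub (smoothS_sub (smooth_pd (sU 0) 2) (smooth_pd (sU 2) 0))
        (smoothS_sub (smoothS_mul (smooth_pd hψ 2) (smooth_pd hS 0)) (smoothS_mul (smooth_pd hψ 0) (smooth_pd hS 2))),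
      pt_sub (smooth_pd (sU 0) 2) (smooth_pd (sU 2) 0),
      pt_sub (smoothS_mul (smooth_pd hψ 2) (smooth_pd hS 0)) (smoothS_mul (smooth_pd hψ 0) (smooth_pd hS 2)),
      pt_mul (smooth_pd hψ 2) (smooth_pd hS 0), pt_mul (smooth_pd hψ 0) (smooth_pd hS 2)]
    rw [pt_pd_comm _ (sU 0) 2 t x, pt_pd_comm _ (sU 2) 0 t x,
      pt_pd_comm _ hψ 2 t x, pt_pd_comm _ hψ 0 t x,
      pt_pd_comm _ hS 2 t x, pt_pd_comm _ hS 0 t x]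
    rw [pd_mul sg sW1 0 t x, pd_one_div hρ hρpos 0 t x,
      pd_sub (smoothS_sub (smooth_pd (sU 0) 2) (smooth_pd (sU 2) 0))
        (smoothS_sub (smoothS_mul (smooth_pd hψ 2) (smooth_pd hS 0)) (smoothS_mul (smooth_pd hψ 0) (smooth_pd hS 2))) 0 t x,
      pd_sub (smooth_pd (sU 0) 2) (smooth_pd (sU 2) 0) 0 t x,
      pd_sub (smoothS_mul (smooth_pd hψ 2) (smooth_pd hS 0)) (smoothS_mul (smooth_pd hψ 0) (smooth_pd hS 2)) 0 t x,
      pd_mul (smooth_pd hψ 2) (smooth_pd hS 0) 0 t x,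
      pd_mul (smooth_pd hψ 0) (smooth_pd hS 2) 0 t x]
    rw [pd_mul sg sW1 1 t x, pd_one_div hρ hρpos 1 t x,
      pd_sub (smoothS_sub (smooth_pd (sU 0) 2) (smooth_pd (sU 2) 0))
        (smoothS_sub (smoothS_mul (smooth_pd hψ 2) (smooth_pd hS 0)) (smoothS_mul (smooth_pd hψ 0) (smooth_pd hS 2))) 1 t x,
      pd_sub (smooth_pd (sU 0) 2) (smooth_pd (sU 2) 0) 1 t x,
      pd_sub (smoothS_mul (smooth_pd hψ 2) (smooth_pd hS 0)) (smoothS_mul (smooth_pd hψ 0) (smooth_pd hS 2)) 1 t x,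
      pd_mul (smooth_pd hψ 2) (smooth_pd hS 0) 1 t x,
      pd_mul (smooth_pd hψ 0) (smooth_pd hS 2) 1 t x]
    rw [pd_mul sg sW1 2 t x, pd_one_div hρ hρpos 2 t x,
      pd_sub (smoothS_sub (smooth_pd (sU 0) 2) (smooth_pd (sU 2) 0))
        (smoothS_sub (smoothS_mul (smooth_pd hψ 2) (smooth_pd hS 0)) (smoothS_mul (smooth_pd hψ 0) (smooth_pd hS 2))) 2 t x,
      pd_sub (smooth_pd (sU 0) 2) (smooth_pd (sU 2) 0) 2 t x,
      pd_sub (smoothS_mul (smooth_pd hψ 2) (smooth_pd hS 0)) (smoothS_mul (smooth_pd hψ 0) (smooth_pd hS 2)) 2 t x,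
      pd_mul (smooth_pd hψ 2) (smooth_pd hS 0) 2 t x,
      pd_mul (smooth_pd hψ 0) (smooth_pd hS 2) 2 t x]
    rw [pd_pd_comm (comp u 2) (sU 2) 1 0 t x, pd_pd_comm ψ hψ 1 0 t x, pd_pd_comm S hS 1 0 t x, pd_pd_comm (comp u 2) (sU 2) 2 0 t x, pd_pd_comm ψ hψ 2 0 t x, pd_pd_comm S hS 2 0 t x]
    have EC1 := eC 2 0
    have EC2 := eC 0 2
    have PA := eP 2
    have PB := eP 0
    have AA := eA 2
    have AB := eA 0
    rw [pd_pd_comm (comp u 0) (sU 0) 2 0 t x, pd_pd_comm (comp u 0) (sU 0) 2 1 t x, pd_pd_comm (fun t x => E t x + p t x / ρ t x) sB 2 0 t x, pd_pd_comm S hS 2 0 t x] at EC1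
    rw [pd_pd_comm ψ hψ 2 0 t x, pd_pd_comm ψ hψ 2 1 t x] at PA
    rw [pd_pd_comm S hS 2 0 t x, pd_pd_comm S hS 2 1 t x] at AA
    beta_reduce
    linear_combination (1 / ρ t x) * EC1 - (1 / ρ t x) * EC2
      - (1 / ρ t x) * (pd 0 S t x * PA - pd 2 S t x * PB
        + pd 2 ψ t x * AB - pd 0 ψ t x * AA)
      - ((pd 2 (comp u 0) t x - pd 0 (comp u 2) t x - (pd 2 ψ t x * pd 0 S t x - pd 0 ψ t x * pd 2 S t x)) / (ρ t x) ^ 2) * eM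
      + (1 / ρ t x) * (pd 2 (comp u 0) t x - pd 0 (comp u 2) t x - (pd 2 ψ t x * pd 0 S t x - pd 0 ψ t x * pd 2 S t x))
        * (pd 0 (comp u 0) t x + pd 1 (comp u 1) t x + pd 2 (comp u 2) t x) * hinv
  ·
    simp only [DtVec, Fin.sum_univ_three, Pi.zero_apply, Fin.zero_eta, Fin.mk_one, Fin.reduceFinMk]
    have e0 : ∀ t' x', comp (fun t x i => (1 / ρ t x) * (curl3 u t x i - cross3 (grad3 ψ t x) (grad3 S t x) i)) 2 t' x'
        = (fun t x => 1 / ρ t x * (pd 0 (comp u 1) t x - pd 1 (comp u 0) t x -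
          (pd 0 ψ t x * pd 1 S t x - pd 1 ψ t x * pd 0 S t x))) t' x' := fun _ _ => rfl
    have k0 : curl3 u t x 0 = pd 1 (comp u 2) t x - pd 2 (comp u 1) t x := rfl
    have c0 : cross3 (grad3 ψ t x) (grad3 S t x) 0 = pd 1 ψ t x * pd 2 S t x - pd 2 ψ t x * pd 1 S t x := rfl
    have k1 : curl3 u t x 1 = pd 2 (comp u 0) t x - pd 0 (comp u 2) t x := rfl
    have c1 : cross3 (grad3 ψ t x) (grad3 S t x) 1 = pd 2 ψ t x * pd 0 S t x - pd 0 ψ t x * pd 2 S t x := rfl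
    have k2 : curl3 u t x 2 = pd 0 (comp u 1) t x - pd 1 (comp u 0) t x := rfl
    have c2 : cross3 (grad3 ψ t x) (grad3 S t x) 2 = pd 0 ψ t x * pd 1 S t x - pd 1 ψ t x * pd 0 S t x := rfl
    rw [pt_congr e0 t x, pd_congr e0 0 t x, pd_congr e0 1 t x, pd_congr e0 2 t x,
      k0, c0, k1, c1, k2, c2, cu 0, cu 1, cu 2]
    rw [pt_mul sg sW2, pt_one_div hρ hρpos,
      pt_sub (smoothS_sub (smooth_pd (sU 1) 0) (smooth_pd (sU 0) 1))
        (smoothS_sub (smoothS_mul (smooth_pd hψ 0) (smooth_pd hS 1)) (smoothS_mul (smooth_pd hψ 1) (smooth_pd hS 0))),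
      pt_sub (smooth_pd (sU 1) 0) (smooth_pd (sU 0) 1),
      pt_sub (smoothS_mul (smooth_pd hψ 0) (smooth_pd hS 1)) (smoothS_mul (smooth_pd hψ 1) (smooth_pd hS 0)),
      pt_mul (smooth_pd hψ 0) (smooth_pd hS 1), pt_mul (smooth_pd hψ 1) (smooth_pd hS 0)]
    rw [pt_pd_comm _ (sU 1) 0 t x, pt_pd_comm _ (sU 0) 1 t x,
      pt_pd_comm _ hψ 0 t x, pt_pd_comm _ hψ 1 t x,
      pt_pd_comm _ hS 0 t x, pt_pd_comm _ hS 1 t x]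
    rw [pd_mul sg sW2 0 t x, pd_one_div hρ hρpos 0 t x,
      pd_sub (smoothS_sub (smooth_pd (sU 1) 0) (smooth_pd (sU 0) 1))
        (smoothS_sub (smoothS_mul (smooth_pd hψ 0) (smooth_pd hS 1)) (smoothS_mul (smooth_pd hψ 1) (smooth_pd hS 0))) 0 t x,
      pd_sub (smooth_pd (sU 1) 0) (smooth_pd (sU 0) 1) 0 t x,
      pd_sub (smoothS_mul (smooth_pd hψ 0) (smooth_pd hS 1)) (smoothS_mul (smooth_pd hψ 1) (smooth_pd hS 0)) 0 t x,
      pd_mul (smooth_pd hψ 0) (smooth_pd hS 1) 0 t x,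
      pd_mul (smooth_pd hψ 1) (smooth_pd hS 0) 0 t x]
    rw [pd_mul sg sW2 1 t x, pd_one_div hρ hρpos 1 t x,
      pd_sub (smoothS_sub (smooth_pd (sU 1) 0) (smooth_pd (sU 0) 1))
        (smoothS_sub (smoothS_mul (smooth_pd hψ 0) (smooth_pd hS 1)) (smoothS_mul (smooth_pd hψ 1) (smooth_pd hS 0))) 1 t x,
      pd_sub (smooth_pd (sU 1) 0) (smooth_pd (sU 0) 1) 1 t x,
      pd_sub (smoothS_mul (smooth_pd hψ 0) (smooth_pd hS 1)) (smoothS_mul (smooth_pd hψ 1) (smooth_pd hS 0)) 1 t x,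
      pd_mul (smooth_pd hψ 0) (smooth_pd hS 1) 1 t x,
      pd_mul (smooth_pd hψ 1) (smooth_pd hS 0) 1 t x]
    rw [pd_mul sg sW2 2 t x, pd_one_div hρ hρpos 2 t x,
      pd_sub (smoothS_sub (smooth_pd (sU 1) 0) (smooth_pd (sU 0) 1))
        (smoothS_sub (smoothS_mul (smooth_pd hψ 0) (smooth_pd hS 1)) (smoothS_mul (smooth_pd hψ 1) (smooth_pd hS 0))) 2 t x,
      pd_sub (smooth_pd (sU 1) 0) (smooth_pd (sU 0) 1) 2 t x,
      pd_sub (smoothS_mul (smooth_pd hψ 0) (smooth_pd hS 1)) (smoothS_mul (smooth_pd hψ 1) (smooth_pd hS 0)) 2 t x,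
      pd_mul (smooth_pd hψ 0) (smooth_pd hS 1) 2 t x,
      pd_mul (smooth_pd hψ 1) (smooth_pd hS 0) 2 t x]
    rw [pd_pd_comm (comp u 1) (sU 1) 1 0 t x, pd_pd_comm ψ hψ 1 0 t x, pd_pd_comm S hS 1 0 t x, pd_pd_comm (comp u 1) (sU 1) 2 0 t x, pd_pd_comm (comp u 0) (sU 0) 2 1 t x, pd_pd_comm ψ hψ 2 0 t x, pd_pd_comm ψ hψ 2 1 t x, pd_pd_comm S hS 2 0 t x, pd_pd_comm S hS 2 1 t x]
    have EC1 := eC 0 1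
    have EC2 := eC 1 0
    have PA := eP 0
    have PB := eP 1
    have AA := eA 0
    have AB := eA 1
    rw [pd_pd_comm (comp u 0) (sU 0) 1 0 t x, pd_pd_comm (fun t x => E t x + p t x / ρ t x) sB 1 0 t x, pd_pd_comm S hS 1 0 t x] at EC2
    rw [pd_pd_comm ψ hψ 1 0 t x] at PB
    rw [pd_pd_comm S hS 1 0 t x] at AB
    beta_reduce
    linear_combination (1 / ρ t x) * EC1 - (1 / ρ t x) * EC2
      - (1 / ρ t x) * (pd 1 S t x * PA - pd 0 S t x * PB
        + pd 0 ψ t x * AB - pd 1 ψ t x * AA)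
      - ((pd 0 (comp u 1) t x - pd 1 (comp u 0) t x - (pd 0 ψ t x * pd 1 S t x - pd 1 ψ t x * pd 0 S t x)) / (ρ t x) ^ 2) * eM
      + (1 / ρ t x) * (pd 0 (comp u 1) t x - pd 1 (comp u 0) t x - (pd 0 ψ t x * pd 1 S t x - pd 1 ψ t x * pd 0 S t x))
        * (pd 0 (comp u 0) t x + pd 1 (comp u 1) t x + pd 2 (comp u 2) t x) * hinv
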